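/- arXiv:2203.02238 — 3 statements merged into one kernel-verified Lean document; each statement's English description precedes it below -/
import Mathlib

section
/- Let R be a commutative ring, A : Matrix (Fin n) (Fin n) R, and d : Fin n → R. Then det (A + Matrix.diagonal d) = ∑ over subsets S ⊆ Fin n of (∏_{i ∈ S} d i) · det (A with all rows and columns indexed by S deleted), where the determinant of the empty matrix is 1. -/
/-!
The determinant is multilinear in the rows, so `det (diagonal d + A)` is the sum, over the sets
`S` of rows taken from `diagonal d`, of the determinant of the mixed matrix. That matrix is block
triangular for the splitting `Sᶜ ⊔ S`, with `A`'s principal minor on `Sᶜ` and the diagonal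
block `d|_S` on `S`.
-/

open Matrix

namespace Matrix

variable {ι R : Type*} [Fintype ι] [DecidableEq ι] [CommRing R]

theorem det_add_eq_sum_det_piecewise (A B : Matrix ι ι R) :
    (A + B).det = ∑ S : Finset ι, det (S.piecewise A B) :=
  (detRowAlternating : (ι → R) [⋀^ι]→ₗ[R] R).map_add_univ A B

theorem det_eq_prod_mul_det_submatrix_compl_of_row_eq_diagonal (M : Matrix ι ι R) (d : ι → R)
    (S : Finset ι) (hS : ∀ i ∈ S, M i = diagonal d i) :
    M.det = (∏ i ∈ S, d i) * (M.submatrix (fun j : {j // j ∈ Sᶜ} => (j : ι))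
      (fun j : {j // j ∈ Sᶜ} => (j : ι))).det := by
  have h_off : ∀ i, i ∉ Sᶜ → ∀ j, j ∈ Sᶜ → M i j = 0 := by
    intro i hi j hj
    have hij : i ≠ j := by rintro rfl; exact hi hj
    rw [hS i (by simpa using hi), diagonal_apply_ne _ hij]
  have h_S : toSquareBlockProp M (· ∉ Sᶜ) = diagonal fun i => d i.1 := by
    ext i j
    rw [toSquareBlockProp_def, of_apply, hS i (by simpa using i.2)]
    simp only [diagonal_apply, Subtype.ext_iff]
  rw [twoBlockTriangular_det M (· ∈ Sᶜ) h_off, h_S, det_diagonal, mul_comm]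
  congr 1
  · exact (Finset.prod_subtype S (fun i => by simp) d).symm
  -- the two minors differ only in the `Fintype` instance on the subtype `Sᶜ`
  · congr!

end Matrix

/-- `det (A + diagonal d)` expands as a sum over subsets `S` of the product of the
`d i` for `i ∈ S` times the principal minor of `A` with rows and columns in `S`
deleted (the determinant of the empty matrix being `1`). -/
theorem det_add_diagonal_eq_sum_minors (n : ℕ) (R : Type*) [CommRing R]
    (A : Matrix (Fin n) (Fin n) R) (d : Fin n → R) :
    (A + Matrix.diagonal d).det =
      ∑ S : Finset (Fin n), (∏ i ∈ S, d i) *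
        (A.submatrix (fun j : {j : Fin n // j ∈ Sᶜ} => (j : Fin n))
          (fun j : {j : Fin n // j ∈ Sᶜ} => (j : Fin n))).det := by
  rw [add_comm, det_add_eq_sum_det_piecewise]
  refine Finset.sum_congr rfl fun S _ => ?_
  refine (det_eq_prod_mul_det_submatrix_compl_of_row_eq_diagonal _ d S
    fun i hi => Finset.piecewise_eq_of_mem _ _ _ hi).trans ?_
  congr 2
  ext i j
  exact congrFun (S.piecewise_eq_of_notMem (diagonal d) A (Finset.mem_compl.mp i.2)) j
end

section
/- Weighted matrix-tree theorem: let w : Fin n → Fin n → R be a symmetric function into a commutative ring with w i i = 0, and define the weighted Laplacian L by L i j = -w i j for i ≠ j and L i i = ∑_{j ≠ i} w i j. Then for every i ∈ Fin n, the determinant of the matrix obtained from L by deleting row i and column i equals the sum over all spanning trees T of the complete graph on Fin n of ∏_{{j,k} ∈ edges(T)} w j k. In particular this minor is independent of the choice of i. -/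
/-!
The reduced Laplacian factors as `N * diagonal W * Nᵀ`, where `N` is the signed vertex–edge
incidence matrix with the row of `i` removed. Expanding the determinant multilinearly in its rows
writes it as a sum, over all maps `r` choosing an edge `r a` for every vertex `a ≠ i`, of
`∏ a, W (r a)` times the integer `∏ a, N a (r a) * det (N b (r a))`. This coefficient vanishes
unless every `r a` contains `a`, the `r a` are distinct and they connect all vertices: otherwise a
factor is zero, two rows agree, or the indicator of the vertices unreachable from `i` is a kernel
vector. Having `n - 1` edges, such an `r` spans a tree, and `r a` must be the edge from `a` to its
parent towards `i`; ordering the vertices by their distance to `i` makes the matrix triangular,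
so the coefficient is `1`. Every spanning tree arises from exactly one such `r`, its parent map.
-/

/-- A spanning tree of the complete graph on `Fin n`: a set of `n - 1` unordered
pairs of distinct vertices whose associated graph is connected and acyclic. -/
def IsSpanningTree (n : ℕ) (T : Finset (Sym2 (Fin n))) : Prop :=
  (∀ e ∈ T, ¬ e.IsDiag) ∧ T.card = n - 1 ∧
    (SimpleGraph.fromEdgeSet (↑T : Set (Sym2 (Fin n)))).IsTree

/-- Delete row `i` and column `i` from a square matrix. -/
def deleteRowCol {n : ℕ} {R : Type*} (L : Matrix (Fin n) (Fin n) R) (i : Fin n) :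
    Matrix {j : Fin n // j ≠ i} {j : Fin n // j ≠ i} R :=
  L.submatrix Subtype.val Subtype.val

open Finset SimpleGraph

namespace Matrix

variable {m k R : Type*} [Fintype m] [DecidableEq m] [CommRing R]

theorem det_mul_eq_sum_prod_mul_det_submatrix [Fintype k] (A : Matrix m k R)
    (B : Matrix k m R) :
    (A * B).det = ∑ r : m → k, (∏ a, A a (r a)) * (B.submatrix r id).det := by
  have hrows : A * B = Matrix.of fun a => ∑ e, A a e • B e := by
    ext a b
    simp [mul_apply, Finset.sum_apply]
  rw [hrows, det, ← AlternatingMap.coe_multilinearMap]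
  refine (MultilinearMap.map_sum _ (fun a e => A a e • B e)).trans (sum_congr rfl fun r _ => ?_)
  exact MultilinearMap.map_smul_univ _ (fun a => A a (r a)) (fun a => B (r a))

theorem det_eq_prod_diag_of_ne_zero_lt {α : Type*} [LinearOrder α] (M : Matrix m m R)
    (d : m → α) (h : ∀ a b, a ≠ b → M a b ≠ 0 → d b < d a) : M.det = ∏ a, M a a := by
  let e₀ := (Fintype.equivFin m).symm
  let e := (Tuple.sort (d ∘ e₀)).trans e₀
  have hmono : Monotone (d ∘ e) := Tuple.monotone_sort (d ∘ e₀)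
  rw [← det_submatrix_equiv_self e, det_of_isLowerTriangular _ fun x y hxy => ?_]
  · exact e.prod_comp fun a => M a a
  · by_contra hne
    exact (h _ _ (e.injective.ne hxy.ne') hne).not_ge (hmono hxy.le)

end Matrix

theorem SimpleGraph.edgeSet_fromEdgeSet_of_forall_not_isDiag {V : Type*} {s : Set (Sym2 V)}
    (h : ∀ e ∈ s, ¬ e.IsDiag) : (fromEdgeSet s).edgeSet = s := by
  rw [edgeSet_fromEdgeSet, sdiff_eq_left, Set.disjoint_left]
  exact h

namespace SimpleGraph.IsTree

variable {V : Type*} {G : SimpleGraph V} (i : V)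

theorem exists_adj_dist_add_one (hG : G.IsTree) {v : V} (hv : v ≠ i) :
    ∃ x, G.Adj x v ∧ G.dist i x + 1 = G.dist i v := by
  obtain ⟨p, -, hp⟩ := hG.connected.exists_path_of_dist i v
  have hnil : ¬ p.Nil := Walk.not_nil_of_ne hv.symm
  have hpos : 0 < p.length := Walk.not_nil_iff_lt_length.mp hnil
  have hle := G.dist_le p.dropLast
  rw [Walk.length_dropLast] at hle
  refine ⟨p.penultimate, p.adj_penultimate hnil, ?_⟩
  rcases hG.dist_eq_dist_add_one_of_adj i (p.adj_penultimate hnil) with h | h <;> omega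

theorem eq_of_adj_of_dist_add_one (hG : G.IsTree) {v x y : V} (hx : G.Adj x v) (hy : G.Adj y v)
    (hdx : G.dist i x + 1 = G.dist i v) (hdy : G.dist i y + 1 = G.dist i v) : x = y := by
  have shortest (z : V) (hz : G.Adj z v) (hdz : G.dist i z + 1 = G.dist i v) :
      ∃ p : G.Path i v, (p : G.Walk i v).penultimate = z := by
    obtain ⟨p, -, hp⟩ := hG.connected.exists_path_of_dist i z
    exact ⟨⟨p.concat hz, (p.concat hz).isPath_of_length_eq_dist (by simp [hp, hdz])⟩,
      p.penultimate_concat hz⟩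
  obtain ⟨p, rfl⟩ := shortest x hx hdx
  obtain ⟨q, rfl⟩ := shortest y hy hdy
  rw [(hG.isAcyclic.subsingleton_path i v).elim p q]

variable (hG : G.IsTree)

noncomputable def parent (v : {v // v ≠ i}) : V :=
  (hG.exists_adj_dist_add_one i v.2).choose

theorem adj_parent (v : {v // v ≠ i}) : G.Adj (hG.parent i v) v :=
  (hG.exists_adj_dist_add_one i v.2).choose_spec.1

theorem dist_parent_add_one (v : {v // v ≠ i}) : G.dist i (hG.parent i v) + 1 = G.dist i v :=
  (hG.exists_adj_dist_add_one i v.2).choose_spec.2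

theorem eq_parent {v : {v // v ≠ i}} {x : V} (hx : G.Adj x v)
    (hdx : G.dist i x + 1 = G.dist i v) : x = hG.parent i v :=
  hG.eq_of_adj_of_dist_add_one i hx (hG.adj_parent i v) hdx (hG.dist_parent_add_one i v)

theorem injective_parentEdge :
    Function.Injective fun v : {v // v ≠ i} => s(↑v, hG.parent i v) := by
  intro v w h
  rcases Sym2.eq_iff.mp h with ⟨h, -⟩ | ⟨hv, hw⟩
  · exact Subtype.ext h
  · have hdv := hG.dist_parent_add_one i v
    have hdw := hG.dist_parent_add_one i w
    rw [hw] at hdv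
    rw [← hv] at hdw
    omega

theorem range_parentEdge [Fintype V] :
    Set.range (fun v : {v // v ≠ i} => s(↑v, hG.parent i v)) = G.edgeSet := by
  classical
  refine Set.eq_of_subset_of_ncard_le ?_ ?_ (Set.toFinite _)
  · rintro _ ⟨v, rfl⟩
    exact (hG.adj_parent i v).symm
  · have hcard := (isTree_iff_connected_and_card.mp hG).2
    rw [Set.ncard_range_of_injective (hG.injective_parentEdge i), ← Nat.card_coe_set_eq]
    simp only [Nat.card_eq_fintype_card, Fintype.card_subtype_compl, Fintype.card_unique]
      at hcard ⊢
    omega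

/-- A deepest vertex `v` whose edge `r v` leads to a child `x` is impossible: `x` is deeper, so
`r x` leads to the parent of `x`, which is `v`, and `r x = r v`. -/
theorem eq_parentEdge_of_injective [Fintype V] {r : {v // v ≠ i} → Sym2 V}
    (hinj : Function.Injective r) (hmem : ∀ v, ↑v ∈ r v) (hE : ∀ v, r v ∈ G.edgeSet)
    (v : {v // v ≠ i}) : r v = s(↑v, hG.parent i v) := by
  classical
  by_contra! hne
  obtain ⟨v, hv, hmax⟩ := (univ.filter fun v => r v ≠ s(↑v, hG.parent i v)).exists_max_image
    (fun v => G.dist i v) ⟨v, by simpa using hne⟩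
  simp only [mem_filter, mem_univ, true_and] at hv hmax
  obtain ⟨x, hx⟩ := Sym2.mem_iff_exists.mp (hmem v)
  have hadj : G.Adj x v := by
    rw [adj_comm, ← mem_edgeSet, ← hx]
    exact hE v
  have hdx : G.dist i x = G.dist i v + 1 := by
    rcases hG.dist_eq_dist_add_one_of_adj i hadj with h | h
    · exact h
    · exact absurd (hx.trans (by rw [hG.eq_parent i hadj h.symm])) hv
  have hxi : x ≠ i := by
    rintro rfl
    simp at hdx
  have hc : r ⟨x, hxi⟩ = s(x, v) := by
    by_contra hc
    have : G.dist i x ≤ G.dist i v :=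
      hmax ⟨x, hxi⟩ (by rwa [← hG.eq_parent i (v := ⟨x, hxi⟩) hadj.symm hdx.symm])
    omega
  exact hadj.ne (congrArg Subtype.val (hinj (hc.trans (hx.trans Sym2.eq_swap).symm)))

end SimpleGraph.IsTree

section Incidence

variable {V : Type*} [LinearOrder V]

def incidence (v : V) : Sym2 V → ℤ :=
  Sym2.lift ⟨fun a b => if a < b then (if v = a then 1 else 0) - (if v = b then 1 else 0)
    else if b < a then (if v = b then 1 else 0) - (if v = a then 1 else 0) else 0, fun a b => by
    rcases lt_trichotomy a b with h | rfl | h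
    · simp [h, h.not_gt]
    · rfl
    · simp [h, h.not_gt]⟩

theorem incidence_eq_zero_of_not_mem {v : V} {e : Sym2 V} (h : v ∉ e) : incidence v e = 0 := by
  induction e using Sym2.ind with
  | _ a b =>
    simp only [Sym2.mem_iff, not_or] at h
    simp [incidence, h.1, h.2]

theorem incidence_eq_zero_of_isDiag {v : V} {e : Sym2 V} (h : e.IsDiag) : incidence v e = 0 := by
  induction e using Sym2.ind with
  | _ a b =>
    obtain rfl : a = b := h
    simp [incidence]

theorem incidence_mk_mul_self {a b : V} (hab : a ≠ b) :
    incidence a s(a, b) * incidence a s(a, b) = 1 := by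
  rcases hab.lt_or_gt with h | h <;> simp [incidence, h, h.not_gt, hab]

theorem incidence_mk_eq {a b : V} (hab : a ≠ b) (v : V) :
    incidence v s(a, b) =
      incidence a s(a, b) * ((if v = a then 1 else 0) - (if v = b then 1 else 0)) := by
  rcases hab.lt_or_gt with h | h <;> simp [incidence, h, h.not_gt, hab]

theorem incidence_mul_self {v : V} {e : Sym2 V} (hv : v ∈ e) (he : ¬ e.IsDiag) :
    incidence v e * incidence v e = 1 := by
  obtain ⟨b, rfl⟩ := Sym2.mem_iff_exists.mp hv
  exact incidence_mk_mul_self (by simpa using he)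

theorem sum_incidence_mul [Fintype V] {a b : V} (hab : a ≠ b) (g : V → ℤ) :
    ∑ v, incidence v s(a, b) * g v = incidence a s(a, b) * (g a - g b) := by
  calc ∑ v, incidence v s(a, b) * g v
      = ∑ v, incidence a s(a, b) * ((if v = a then g v else 0) - (if v = b then g v else 0)) :=
        sum_congr rfl fun v _ => by rw [incidence_mk_eq hab v]; split_ifs <;> ring
    _ = _ := by simp [← mul_sum, sum_sub_distrib]

theorem incidence_mk_mul_incidence_mk {a b : V} (hab : a ≠ b) :
    incidence a s(a, b) * incidence b s(a, b) = -1 := by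
  rw [incidence_mk_eq hab b, if_neg hab.symm, if_pos rfl, zero_sub, mul_neg_one, mul_neg,
    incidence_mk_mul_self hab]

variable [Fintype V] {R : Type*} [CommRing R]

theorem laplacian_eq_sum_incidence (W : Sym2 V → R) (L : Matrix V V R)
    (hL : ∀ u v, u ≠ v → L u v = -W s(u, v))
    (hLd : ∀ u, L u u = ∑ v ∈ univ.filter (· ≠ u), W s(u, v)) (u v : V) :
    L u v = ∑ e, (incidence u e : R) * W e * incidence v e := by
  by_cases huv : u = v
  · subst huv
    have hsq (e : Sym2 V) : (incidence u e : R) * W e * incidence u e =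
        if u ∈ e ∧ ¬ e.IsDiag then W e else 0 := by
      split_ifs with h
      · rw [mul_right_comm, ← Int.cast_mul, incidence_mul_self h.1 h.2, Int.cast_one, one_mul]
      · rcases not_and_or.mp h with h | h
        · simp [incidence_eq_zero_of_not_mem h]
        · simp [incidence_eq_zero_of_isDiag (not_not.mp h)]
    rw [hLd, sum_congr rfl fun e _ => hsq e, ← sum_filter]
    refine sum_bij (fun v _ => s(u, v)) (fun v hv => ?_) (fun v _ w _ h => Sym2.congr_right.mp h)
      (fun e he => ?_) fun _ _ => rfl
    · simp only [mem_filter, mem_univ, true_and] at hv ⊢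
      exact ⟨Sym2.mem_mk_left u v, by simpa using hv.symm⟩
    · simp only [mem_filter, mem_univ, true_and] at he ⊢
      obtain ⟨b, rfl⟩ := Sym2.mem_iff_exists.mp he.1
      exact ⟨b, by simpa [eq_comm] using he.2, rfl⟩
  · rw [hL u v huv, sum_eq_single s(u, v) (fun e _ he => ?_) (by simp), mul_right_comm,
      ← Int.cast_mul, incidence_mk_mul_incidence_mk huv]
    · simp
    by_cases hmem : u ∈ e ∧ v ∈ e
    · exact absurd ((Sym2.mem_and_mem_iff huv).mp hmem) he
    · rcases not_and_or.mp hmem with h | h <;> simp [incidence_eq_zero_of_not_mem h]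

end Incidence

section ReducedLaplacian

variable {V : Type*} (i : V)

structure IsTreeEdgeChoice (r : {v // v ≠ i} → Sym2 V) : Prop where
  mem : ∀ a, ↑a ∈ r a
  not_isDiag : ∀ a, ¬ (r a).IsDiag
  injective : Function.Injective r
  isTree : (fromEdgeSet (Set.range r)).IsTree

namespace IsTreeEdgeChoice

variable {i} {r : {v // v ≠ i} → Sym2 V}

theorem edgeSet_eq (h : IsTreeEdgeChoice i r) :
    (fromEdgeSet (Set.range r)).edgeSet = Set.range r :=
  edgeSet_fromEdgeSet_of_forall_not_isDiag (Set.forall_mem_range.mpr h.not_isDiag)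

theorem eq_parentEdge [Fintype V] (h : IsTreeEdgeChoice i r) (a : {v // v ≠ i}) :
    r a = s(↑a, h.isTree.parent i a) :=
  h.isTree.eq_parentEdge_of_injective i h.injective h.mem
    (fun b => by rw [h.edgeSet_eq]; exact Set.mem_range_self b) a

end IsTreeEdgeChoice

variable [Fintype V] [LinearOrder V]

def incidenceMinor (r : {v // v ≠ i} → Sym2 V) : Matrix {v // v ≠ i} {v // v ≠ i} ℤ :=
  Matrix.of fun a b => incidence (b : V) (r a)

/-- The indicator of the vertices not reachable from `i` is a kernel vector: every edge joins two
vertices that are both reachable from `i` or both not. -/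
theorem det_incidenceMinor_eq_zero_of_not_connected {r : {v // v ≠ i} → Sym2 V}
    (h : ¬ (fromEdgeSet (Set.range r)).Connected) : (incidenceMinor i r).det = 0 := by
  set G := fromEdgeSet (Set.range r)
  obtain ⟨c, hc⟩ : ∃ c, ¬ G.Reachable i c := by
    by_contra! hreach
    exact h ((connected_iff G).mpr ⟨fun u v => (hreach u).symm.trans (hreach v), ⟨i⟩⟩)
  let g : V → ℤ := fun v => if G.Reachable i v then 0 else 1
  rw [← Matrix.exists_mulVec_eq_zero_iff]
  refine ⟨fun b => g b, fun h0 => ?_, ?_⟩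
  · have := congrFun h0 ⟨c, fun hci => hc (hci ▸ Reachable.refl _)⟩
    simp [g, hc] at this
  funext a
  have hsum : (incidenceMinor i r).mulVec (fun b => g b) a = ∑ v, incidence v (r a) * g v := by
    rw [← sum_erase univ (a := i) (by simp [g]),
      sum_subtype (univ.erase i) (p := (· ≠ i)) (by simp)]
    rfl
  rw [hsum]
  obtain ⟨⟨x, y⟩, hxy⟩ := Quot.exists_rep (r a)
  change s(x, y) = r a at hxy
  by_cases hd : x = y
  · simp [incidence_eq_zero_of_isDiag (show (r a).IsDiag by rw [← hxy, hd]; rfl)]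
  have hadj : G.Adj x y := by
    rw [fromEdgeSet_adj]
    exact ⟨⟨a, hxy.symm⟩, hd⟩
  have hg : g x = g y := by
    have hiff : G.Reachable i x ↔ G.Reachable i y :=
      ⟨fun h => h.trans hadj.reachable, fun h => h.trans hadj.symm.reachable⟩
    simp only [g, hiff]
  rw [← hxy, sum_incidence_mul hd, hg, sub_self, mul_zero]
  rfl

theorem isTree_of_connected {r : {v // v ≠ i} → Sym2 V} (hinj : Function.Injective r)
    (hdiag : ∀ a, ¬ (r a).IsDiag) (h : (fromEdgeSet (Set.range r)).Connected) :
    (fromEdgeSet (Set.range r)).IsTree := by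
  rw [isTree_iff_connected_and_card,
    edgeSet_fromEdgeSet_of_forall_not_isDiag (Set.forall_mem_range.mpr hdiag),
    Nat.card_range_of_injective hinj]
  refine ⟨h, ?_⟩
  have : 0 < Fintype.card V := Fintype.card_pos_iff.mpr ⟨i⟩
  simp only [Nat.card_eq_fintype_card, Fintype.card_subtype_compl, Fintype.card_unique]
  omega

variable {i} in
/-- Row `a` is supported on `a` and its parent, which is closer to `i`: the matrix is
triangular for the order by distance to `i`. -/
theorem IsTreeEdgeChoice.det_incidenceMinor {r : {v // v ≠ i} → Sym2 V}
    (h : IsTreeEdgeChoice i r) :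
    (incidenceMinor i r).det = ∏ a : {v // v ≠ i}, incidence ↑a (r a) := by
  refine Matrix.det_eq_prod_diag_of_ne_zero_lt _ (fun a => (fromEdgeSet (Set.range r)).dist i a)
    fun a b hab hne => ?_
  rw [incidenceMinor, Matrix.of_apply, h.eq_parentEdge a] at hne
  have hb : (b : V) = h.isTree.parent i a := by
    rcases Sym2.mem_iff.mp (by_contra fun hb => hne (incidence_eq_zero_of_not_mem hb)) with hb | hb
    · exact absurd (Subtype.ext hb).symm hab
    · exact hb
  simp only [hb, ← h.isTree.dist_parent_add_one i a]
  omega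

theorem prod_incidence_mul_det_incidenceMinor [DecidablePred (IsTreeEdgeChoice i)]
    (r : {v // v ≠ i} → Sym2 V) :
    (∏ a : {v // v ≠ i}, incidence ↑a (r a)) * (incidenceMinor i r).det =
      if IsTreeEdgeChoice i r then 1 else 0 := by
  split_ifs with h
  · rw [h.det_incidenceMinor, ← prod_mul_distrib]
    exact prod_eq_one fun a _ => incidence_mul_self (h.mem a) (h.not_isDiag a)
  suffices (∏ a : {v // v ≠ i}, incidence ↑a (r a)) = 0 ∨ (incidenceMinor i r).det = 0 by
    rcases this with h0 | h0 <;> simp [h0]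
  by_contra! ⟨hprod, hdet⟩
  have hmem (a) : ↑a ∈ r a := by_contra fun ha =>
    hprod (prod_eq_zero (mem_univ a) (incidence_eq_zero_of_not_mem ha))
  have hdiag (a) : ¬ (r a).IsDiag := fun ha =>
    hprod (prod_eq_zero (mem_univ a) (incidence_eq_zero_of_isDiag ha))
  have hinj : Function.Injective r := fun a b hab => by_contra fun hne =>
    hdet (Matrix.det_zero_of_row_eq hne (by ext; simp [incidenceMinor, hab]))
  have hconn := not_not.mp (mt (det_incidenceMinor_eq_zero_of_not_connected i) hdet)
  exact h ⟨hmem, hdiag, hinj, isTree_of_connected i hinj hdiag hconn⟩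

theorem det_submatrix_laplacian {R : Type*} [CommRing R] (W : Sym2 V → R) (L : Matrix V V R)
    (hL : ∀ u v, u ≠ v → L u v = -W s(u, v))
    (hLd : ∀ u, L u u = ∑ v ∈ univ.filter (· ≠ u), W s(u, v))
    [DecidablePred (IsTreeEdgeChoice i)] :
    (L.submatrix ((↑) : {v // v ≠ i} → V) (↑)).det =
      ∑ r ∈ univ.filter (IsTreeEdgeChoice i), ∏ a, W (r a) := by
  have hfac : L.submatrix ((↑) : {v // v ≠ i} → V) (↑) =
      (Matrix.of fun (a : {v // v ≠ i}) e => (incidence (a : V) e : R) * W e) *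
        Matrix.of fun e (b : {v // v ≠ i}) => (incidence (b : V) e : R) := by
    ext a b
    simp [Matrix.mul_apply, laplacian_eq_sum_incidence W L hL hLd]
  rw [hfac, Matrix.det_mul_eq_sum_prod_mul_det_submatrix, sum_filter]
  refine sum_congr rfl fun r _ => ?_
  have hminor : (Matrix.of fun e (b : {v // v ≠ i}) => (incidence (b : V) e : R)).submatrix r id
      = (incidenceMinor i r).map (↑) := rfl
  simp only [Matrix.of_apply, hminor, ← Int.cast_det, prod_mul_distrib]
  calc _ = (((∏ a : {v // v ≠ i}, incidence ↑a (r a)) * (incidenceMinor i r).det : ℤ) : R) *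
        ∏ a, W (r a) := by
        push_cast
        ring
    _ = _ := by
      rw [prod_incidence_mul_det_incidenceMinor]
      split_ifs <;> simp

end ReducedLaplacian

theorem sum_isTreeEdgeChoice_eq_sum_isSpanningTree {n : ℕ} (i : Fin n) {R : Type*}
    [CommSemiring R] (W : Sym2 (Fin n) → R) [DecidablePred (IsTreeEdgeChoice i)]
    [DecidablePred (IsSpanningTree n)] :
    ∑ r ∈ univ.filter (IsTreeEdgeChoice i), ∏ a, W (r a) =
      ∑ T ∈ univ.filter (IsSpanningTree n), ∏ e ∈ T, W e := by
  refine sum_nbij (fun r => univ.image r) (fun r hr => ?_) (fun r hr r' hr' h => ?_)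
    (fun T hT => ?_) fun r hr => ?_
  · simp only [mem_filter, mem_univ, true_and] at hr ⊢
    refine ⟨?_, ?_, by simpa using hr.isTree⟩
    · simp only [mem_image, mem_univ, true_and, forall_exists_index]
      rintro _ a rfl
      exact hr.not_isDiag a
    · rw [card_image_of_injective _ hr.injective]
      simp
  · simp only [coe_filter, mem_univ, true_and, Set.mem_ofPred_eq] at hr hr'
    have hrange : Set.range r' = Set.range r := by
      simpa using congrArg (fun T : Finset _ => (T : Set (Sym2 (Fin n)))) h.symm
    funext a
    rw [hr.eq_parentEdge a, hr.isTree.eq_parentEdge_of_injective i hr'.injective hr'.mem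
      (fun b => by rw [hr.edgeSet_eq, ← hrange]; exact Set.mem_range_self b) a]
  · simp only [coe_filter, mem_univ, true_and, Set.mem_ofPred_eq] at hT
    obtain ⟨hdiag, -, hT⟩ := hT
    have hrange : Set.range (fun v => s(↑v, hT.parent i v)) = T := by
      rw [hT.range_parentEdge i, edgeSet_fromEdgeSet_of_forall_not_isDiag hdiag]
    refine ⟨fun v => s(↑v, hT.parent i v), ?_, ?_⟩
    · simp only [coe_filter, mem_univ, true_and, Set.mem_ofPred_eq]
      exact ⟨fun v => Sym2.mem_mk_left _ _, fun v => by simpa using (hT.adj_parent i v).ne',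
        hT.injective_parentEdge i, by rwa [hrange]⟩
    · simp only
      rw [← coe_inj, coe_image, coe_univ, Set.image_univ, hrange]
  · exact (prod_image fun a _ b _ h => (mem_filter.mp hr).2.injective h).symm

open Classical in
theorem weighted_matrix_tree_general (n : ℕ) (R : Type*) [CommRing R]
    (w : Fin n → Fin n → R) (hsym : ∀ i j, w i j = w j i)
    (L : Matrix (Fin n) (Fin n) R)
    (hL : ∀ i j, i ≠ j → L i j = - w i j)
    (hLd : ∀ i, L i i = ∑ j ∈ Finset.univ.filter (fun j => j ≠ i), w i j)
    (i : Fin n) :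
    (deleteRowCol L i).det =
      ∑ T ∈ Finset.univ.filter (fun T : Finset (Sym2 (Fin n)) => IsSpanningTree n T),
        ∏ e ∈ T, Sym2.lift ⟨w, fun a b => hsym a b⟩ e := by
  rw [deleteRowCol, det_submatrix_laplacian i (Sym2.lift ⟨w, fun a b => hsym a b⟩) L hL hLd]
  exact sum_isTreeEdgeChoice_eq_sum_isSpanningTree i _

open Classical in
/-- Weighted matrix-tree theorem: for a symmetric weight `w` with vanishing
diagonal, any principal `(i,i)`-minor of the weighted Laplacian equals the sum
over spanning trees of the complete graph of the products of edge weights. -/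
theorem weighted_matrix_tree (n : ℕ) (R : Type*) [CommRing R]
    (w : Fin n → Fin n → R) (hsym : ∀ i j, w i j = w j i) (hdiag : ∀ i, w i i = 0)
    (L : Matrix (Fin n) (Fin n) R)
    (hL : ∀ i j, i ≠ j → L i j = - w i j)
    (hLd : ∀ i, L i i = ∑ j ∈ Finset.univ.filter (fun j => j ≠ i), w i j)
    (i : Fin n) :
    (deleteRowCol L i).det =
      ∑ T ∈ Finset.univ.filter (fun T : Finset (Sym2 (Fin n)) => IsSpanningTree n T),
        ∏ e ∈ T, Sym2.lift ⟨w, fun a b => hsym a b⟩ e :=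
  weighted_matrix_tree_general n R w hsym L hL hLd i
end

section
/- Three-point kinematics: let κ₁, κ₂, κ₃ ∈ ℂ² and κ̃₁, κ̃₂, κ̃₃ ∈ ℂ² satisfy κ₁⬝κ̃₁ᵀ + κ₂⬝κ̃₂ᵀ + κ₃⬝κ̃₃ᵀ = 0 (as 2×2 matrices). Then ⟨κ₁,κ₂⟩·⟨κ̃₁,κ̃₂⟩ = 0, ⟨κ₂,κ₃⟩·⟨κ̃₂,κ̃₃⟩ = 0, and ⟨κ₃,κ₁⟩·⟨κ̃₃,κ̃₁⟩ = 0. Moreover, if ⟨κ̃₁,κ̃₂⟩ ≠ 0 then ⟨κ_i,κ_j⟩ = 0 for all i, j. -/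
/-- The symplectic pairing on `ℂ²`. -/
def spinorBracket (u v : Fin 2 → ℂ) : ℂ := u 0 * v 1 - u 1 * v 0

/-- Three-point kinematics: momentum conservation for three rank-one (null)
momenta forces `⟨κᵢ κⱼ⟩ [κ̃ᵢ κ̃ⱼ] = 0` for each pair, and if `[κ̃₁ κ̃₂] ≠ 0`
then all the angle brackets `⟨κᵢ κⱼ⟩` vanish. -/
theorem three_point_kinematics (κ κt : Fin 3 → Fin 2 → ℂ)
    (hcons : ∑ i : Fin 3, Matrix.of (fun α β : Fin 2 => κ i α * κt i β) = 0) :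
    spinorBracket (κ 0) (κ 1) * spinorBracket (κt 0) (κt 1) = 0 ∧
    spinorBracket (κ 1) (κ 2) * spinorBracket (κt 1) (κt 2) = 0 ∧
    spinorBracket (κ 2) (κ 0) * spinorBracket (κt 2) (κt 0) = 0 ∧
    (spinorBracket (κt 0) (κt 1) ≠ 0 →
      ∀ i j : Fin 3, spinorBracket (κ i) (κ j) = 0) := by
  have h : ∀ α β : Fin 2,
      κ 0 α * κt 0 β + κ 1 α * κt 1 β + κ 2 α * κt 2 β = 0 := by
    intro α β
    have := congrFun (congrFun hcons α) β
    simpa [Fin.sum_univ_three, Matrix.sum_apply] using this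
  have h00 := h 0 0; have h01 := h 0 1; have h10 := h 1 0; have h11 := h 1 1
  simp only [spinorBracket]
  refine ⟨?_, ?_, ?_, ?_⟩
  · -- pair (0,1), remaining 2
    linear_combination (κ 0 1 * κt 0 1 + κ 1 1 * κt 1 1) * h00
      - (κ 0 1 * κt 0 0 + κ 1 1 * κt 1 0) * h01
      + (κ 2 0 * κt 2 1) * h10 - (κ 2 0 * κt 2 0) * h11
  · -- pair (1,2), remaining 0
    linear_combination (κ 1 1 * κt 1 1 + κ 2 1 * κt 2 1) * h00
      - (κ 1 1 * κt 1 0 + κ 2 1 * κt 2 0) * h01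
      + (κ 0 0 * κt 0 1) * h10 - (κ 0 0 * κt 0 0) * h11
  · -- pair (2,0), remaining 1
    linear_combination (κ 2 1 * κt 2 1 + κ 0 1 * κt 0 1) * h00
      - (κ 2 1 * κt 2 0 + κ 0 1 * κt 0 0) * h01
      + (κ 1 0 * κt 1 1) * h10 - (κ 1 0 * κt 1 0) * h11
  · intro hp i j
    set p := κt 0 0 * κt 1 1 - κt 0 1 * κt 1 0 with hpdef
    have hp' : p ≠ 0 := by simpa [spinorBracket, hpdef] using hp
    have hA : ∀ α : Fin 2,
        κ 0 α * p + κ 2 α * (κt 2 0 * κt 1 1 - κt 2 1 * κt 1 0) = 0 := by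
      intro α
      linear_combination κt 1 1 * h α 0 - κt 1 0 * h α 1
    have hB : ∀ α : Fin 2,
        κ 1 α * p - κ 2 α * (κt 2 0 * κt 0 1 - κt 2 1 * κt 0 0) = 0 := by
      intro α
      linear_combination -(κt 0 1) * h α 0 + κt 0 0 * h α 1
    have hcancel : ∀ x : ℂ, x * (p * p) = 0 → x = 0 := by
      intro x hx
      rcases mul_eq_zero.mp hx with h' | h'
      · exact h'
      · exact absurd (mul_self_eq_zero.mp h') hp'
    have k01 : κ 0 0 * κ 1 1 - κ 0 1 * κ 1 0 = 0 := by
      refine hcancel _ ?_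
      linear_combination (κ 1 1 * p) * hA 0 - (κ 1 0 * p) * hA 1
        - (κ 2 0 * (κt 2 0 * κt 1 1 - κt 2 1 * κt 1 0)) * hB 1
        + (κ 2 1 * (κt 2 0 * κt 1 1 - κt 2 1 * κt 1 0)) * hB 0
    have k02 : κ 0 0 * κ 2 1 - κ 0 1 * κ 2 0 = 0 := by
      refine hcancel _ ?_
      linear_combination (κ 2 1 * p) * hA 0 - (κ 2 0 * p) * hA 1
    have k12 : κ 1 0 * κ 2 1 - κ 1 1 * κ 2 0 = 0 := by
      refine hcancel _ ?_
      linear_combination (κ 2 1 * p) * hB 0 - (κ 2 0 * p) * hB 1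
    have k10 : κ 1 0 * κ 0 1 - κ 1 1 * κ 0 0 = 0 := by linear_combination -k01
    have k20 : κ 2 0 * κ 0 1 - κ 2 1 * κ 0 0 = 0 := by linear_combination -k02
    have k21 : κ 2 0 * κ 1 1 - κ 2 1 * κ 1 0 = 0 := by linear_combination -k12
    have kd : ∀ m : Fin 3, κ m 0 * κ m 1 - κ m 1 * κ m 0 = 0 := fun m => by ring
    fin_cases i <;> fin_cases j <;>
      first
        | exact kd 0 | exact kd 1 | exact kd 2
        | exact k01 | exact k02 | exact k12
        | exact k10 | exact k20 | exact k21
end
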